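/- arXiv:math/0701448 — 3 statements merged into one kernel-verified Lean document; each statement's English description precedes it below -/
import Mathlib

section
/- For every z ∈ ℂ and every τ ∈ ℂ with τ ≠ 0, D(z,τ) = τ^{2m}·D(z, τ⁻¹). -/
open Matrix

/-- Fundamental matrix-valued solutions of the Jacobi recursion
`y_{n+1} = a_n⁻¹ ((z I - b_n) y_n - a_{n-1}ᵀ y_{n-1})`. -/
noncomputable def matSol {m : ℕ} (a b : ℤ → Matrix (Fin m) (Fin m) ℝ) (z : ℂ)
    (y0 y1 : Matrix (Fin m) (Fin m) ℂ) : ℕ → Matrix (Fin m) (Fin m) ℂ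
  | 0 => y0
  | 1 => y1
  | n + 2 =>
      (((a ((n : ℤ) + 1))⁻¹).map Complex.ofReal) *
        ((z • (1 : Matrix (Fin m) (Fin m) ℂ) - (b ((n : ℤ) + 1)).map Complex.ofReal) *
            matSol a b z y0 y1 (n + 1) -
          ((a (n : ℤ)).map Complex.ofReal)ᵀ * matSol a b z y0 y1 n)

/-- The monodromy matrix `ℳ_p(z) = [[θ_p, φ_p], [θ_{p+1}, φ_{p+1}]]`. -/
noncomputable def monodromy {m : ℕ} (a b : ℤ → Matrix (Fin m) (Fin m) ℝ) (p : ℕ) (z : ℂ) :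
    Matrix (Fin m ⊕ Fin m) (Fin m ⊕ Fin m) ℂ :=
  Matrix.fromBlocks (matSol a b z 1 0 p) (matSol a b z 0 1 p)
    (matSol a b z 1 0 (p + 1)) (matSol a b z 0 1 (p + 1))

/-- `D(z,τ) = det(ℳ_p(z) - τ I_{2m})`. -/
noncomputable def Dfun {m : ℕ} (a b : ℤ → Matrix (Fin m) (Fin m) ℝ) (p : ℕ) (z τ : ℂ) : ℂ :=
  (monodromy a b p z - τ • (1 : Matrix (Fin m ⊕ Fin m) (Fin m ⊕ Fin m) ℂ)).det

namespace DInvAux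

variable {m : ℕ}

noncomputable def A (a : ℤ → Matrix (Fin m) (Fin m) ℝ) (k : ℤ) : Matrix (Fin m) (Fin m) ℂ :=
  (a k).map Complex.ofReal

noncomputable def Ai (a : ℤ → Matrix (Fin m) (Fin m) ℝ) (k : ℤ) : Matrix (Fin m) (Fin m) ℂ :=
  ((a k)⁻¹).map Complex.ofReal

noncomputable def S (b : ℤ → Matrix (Fin m) (Fin m) ℝ) (z : ℂ) (k : ℤ) :
    Matrix (Fin m) (Fin m) ℂ :=
  z • 1 - (b k).map Complex.ofReal

lemma map_mul' (X Y : Matrix (Fin m) (Fin m) ℝ) :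
    (X * Y).map Complex.ofReal = X.map Complex.ofReal * Y.map Complex.ofReal := by
  have h : Complex.ofReal = ⇑Complex.ofRealHom := rfl
  rw [h, Matrix.map_mul]

lemma map_one' : ((1 : Matrix (Fin m) (Fin m) ℝ).map Complex.ofReal) = 1 :=
  Matrix.map_one _ Complex.ofReal_zero Complex.ofReal_one

lemma A_mul_Ai (a : ℤ → Matrix (Fin m) (Fin m) ℝ) (ha : ∀ n : ℤ, IsUnit (a n).det) (k : ℤ) :
    A a k * Ai a k = 1 := by
  rw [A, Ai, ← map_mul', Matrix.mul_nonsing_inv _ (ha k), map_one']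

lemma Ai_mul_A (a : ℤ → Matrix (Fin m) (Fin m) ℝ) (ha : ∀ n : ℤ, IsUnit (a n).det) (k : ℤ) :
    Ai a k * A a k = 1 := by
  rw [A, Ai, ← map_mul', Matrix.nonsing_inv_mul _ (ha k), map_one']

lemma det_A_ne (a : ℤ → Matrix (Fin m) (Fin m) ℝ) (ha : ∀ n : ℤ, IsUnit (a n).det) (k : ℤ) :
    (A a k).det ≠ 0 := by
  have h : (A a k).det = ((a k).det : ℂ) := (RingHom.map_det Complex.ofRealHom (a k)).symm
  rw [h]
  exact_mod_cast (isUnit_iff_ne_zero.mp (ha k))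

noncomputable def T (a b : ℤ → Matrix (Fin m) (Fin m) ℝ) (z : ℂ) (n : ℕ) :
    Matrix (Fin m ⊕ Fin m) (Fin m ⊕ Fin m) ℂ :=
  fromBlocks 0 1 (-(Ai a ((n : ℤ) + 1) * (A a (n : ℤ))ᵀ)) (Ai a ((n : ℤ) + 1) * S b z ((n : ℤ) + 1))

noncomputable def J (a : ℤ → Matrix (Fin m) (Fin m) ℝ) (k : ℤ) :
    Matrix (Fin m ⊕ Fin m) (Fin m ⊕ Fin m) ℂ :=
  fromBlocks 0 (A a k) (-(A a k)ᵀ) 0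

noncomputable def M (a b : ℤ → Matrix (Fin m) (Fin m) ℝ) (z : ℂ) (n : ℕ) :
    Matrix (Fin m ⊕ Fin m) (Fin m ⊕ Fin m) ℂ :=
  fromBlocks (matSol a b z 1 0 n) (matSol a b z 0 1 n)
    (matSol a b z 1 0 (n + 1)) (matSol a b z 0 1 (n + 1))

lemma matSol_succ_succ (a b : ℤ → Matrix (Fin m) (Fin m) ℝ) (z : ℂ)
    (y0 y1 : Matrix (Fin m) (Fin m) ℂ) (n : ℕ) :
    matSol a b z y0 y1 (n + 1 + 1) =
      -(Ai a ((n : ℤ) + 1) * (A a (n : ℤ))ᵀ) * matSol a b z y0 y1 n +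
        (Ai a ((n : ℤ) + 1) * S b z ((n : ℤ) + 1)) * matSol a b z y0 y1 (n + 1) := by
  show (((a ((n : ℤ) + 1))⁻¹).map Complex.ofReal) * _ = _
  rw [Ai, A, S]
  noncomm_ring

lemma M_zero (a b : ℤ → Matrix (Fin m) (Fin m) ℝ) (z : ℂ) : M a b z 0 = 1 := by
  show fromBlocks (1 : Matrix (Fin m) (Fin m) ℂ) 0 0 1 = 1
  exact fromBlocks_one

lemma M_succ (a b : ℤ → Matrix (Fin m) (Fin m) ℝ) (z : ℂ) (n : ℕ) :
    M a b z (n + 1) = T a b z n * M a b z n := by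
  rw [M, T, M, fromBlocks_multiply, fromBlocks_inj]
  refine ⟨by simp, by simp, ?_, ?_⟩
  · rw [matSol_succ_succ]
  · rw [matSol_succ_succ]

lemma S_symm (b : ℤ → Matrix (Fin m) (Fin m) ℝ) (hb : ∀ n : ℤ, (b n)ᵀ = b n) (z : ℂ) (k : ℤ) :
    (S b z k)ᵀ = S b z k := by
  rw [S, transpose_sub, transpose_smul, transpose_one, ← Matrix.transpose_map, hb]

lemma T_symp (a b : ℤ → Matrix (Fin m) (Fin m) ℝ) (hb : ∀ n : ℤ, (b n)ᵀ = b n)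
    (ha : ∀ n : ℤ, IsUnit (a n).det) (z : ℂ) (n : ℕ) :
    (T a b z n)ᵀ * J a ((n : ℤ) + 1) * T a b z n = J a (n : ℤ) := by
  rw [T, J, J, fromBlocks_transpose, fromBlocks_multiply, fromBlocks_multiply, fromBlocks_inj]
  set A₀ := A a (n : ℤ) with hA₀
  set A₁ := A a ((n : ℤ) + 1) with hA₁
  set Ai₁ := Ai a ((n : ℤ) + 1) with hAi₁
  set S₁ := S b z ((n : ℤ) + 1) with hS₁
  have hS : S₁ᵀ = S₁ := S_symm b hb z _
  have hAC : A₁ * (Ai₁ * A₀ᵀ) = A₀ᵀ := by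
    rw [hA₁, hAi₁, ← Matrix.mul_assoc, A_mul_Ai a ha, Matrix.one_mul]
  have hAD : A₁ * (Ai₁ * S₁) = S₁ := by
    rw [hA₁, hAi₁, hS₁, ← Matrix.mul_assoc, A_mul_Ai a ha, Matrix.one_mul]
  have e1 : (Ai₁ * A₀ᵀ)ᵀ * A₁ᵀ = A₀ := by
    rw [← transpose_mul, hAC, transpose_transpose]
  have e2 : (Ai₁ * S₁)ᵀ * A₁ᵀ = S₁ := by
    rw [← transpose_mul, hAD, hS]
  refine ⟨by simp, ?_, ?_, ?_⟩
  · simp only [transpose_zero, transpose_one, transpose_neg, Matrix.neg_mul, Matrix.mul_neg,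
      Matrix.zero_mul, Matrix.mul_zero, Matrix.one_mul, Matrix.mul_one, zero_add, add_zero,
      neg_neg, neg_zero, e1]
  · simp only [transpose_zero, transpose_one, transpose_neg, Matrix.neg_mul, Matrix.mul_neg,
      Matrix.zero_mul, Matrix.mul_zero, Matrix.one_mul, Matrix.mul_one, zero_add, add_zero,
      neg_neg, neg_zero, hAC]
  · simp only [transpose_zero, transpose_one, transpose_neg, Matrix.neg_mul, Matrix.mul_neg,
      Matrix.zero_mul, Matrix.mul_zero, Matrix.one_mul, Matrix.mul_one, zero_add, add_zero,
      neg_neg, neg_zero, e2, hAD, neg_add_cancel]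

lemma M_symp (a b : ℤ → Matrix (Fin m) (Fin m) ℝ) (hb : ∀ n : ℤ, (b n)ᵀ = b n)
    (ha : ∀ n : ℤ, IsUnit (a n).det) (z : ℂ) :
    ∀ n : ℕ, (M a b z n)ᵀ * J a (n : ℤ) * M a b z n = J a 0
  | 0 => by simp [M_zero]
  | (n + 1) => by
      have hc : ((n + 1 : ℕ) : ℤ) = (n : ℤ) + 1 := by push_cast; ring
      rw [M_succ, hc, transpose_mul]
      calc (M a b z n)ᵀ * (T a b z n)ᵀ * J a ((n : ℤ) + 1) * (T a b z n * M a b z n)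
          = (M a b z n)ᵀ * ((T a b z n)ᵀ * J a ((n : ℤ) + 1) * T a b z n) * M a b z n := by
            simp only [Matrix.mul_assoc]
        _ = (M a b z n)ᵀ * J a (n : ℤ) * M a b z n := by rw [T_symp a b hb ha]
        _ = J a 0 := M_symp a b hb ha z n

lemma det_U : (fromBlocks (0 : Matrix (Fin m) (Fin m) ℂ) (1 : Matrix (Fin m) (Fin m) ℂ)
    (-1 : Matrix (Fin m) (Fin m) ℂ) (0 : Matrix (Fin m) (Fin m) ℂ)).det = 1 := by
  have h : (fromBlocks (0 : Matrix (Fin m) (Fin m) ℂ) (1 : Matrix (Fin m) (Fin m) ℂ)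
      (-1 : Matrix (Fin m) (Fin m) ℂ) (0 : Matrix (Fin m) (Fin m) ℂ)) =
      fromBlocks 1 1 0 1 * fromBlocks 1 0 (-1) 1 * fromBlocks 1 1 0 1 := by
    rw [fromBlocks_multiply, fromBlocks_multiply, fromBlocks_inj]
    refine ⟨?_, ?_, ?_, ?_⟩ <;> noncomm_ring
  rw [h, det_mul, det_mul, det_fromBlocks_zero₂₁, det_fromBlocks_zero₁₂]
  simp

lemma det_T (a b : ℤ → Matrix (Fin m) (Fin m) ℝ) (z : ℂ) (n : ℕ) :
    (T a b z n).det = (Ai a ((n : ℤ) + 1)).det * (A a (n : ℤ)).det := by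
  have h : T a b z n = fromBlocks 0 1 (-1) 0 *
      fromBlocks (Ai a ((n : ℤ) + 1) * (A a (n : ℤ))ᵀ)
        (-(Ai a ((n : ℤ) + 1) * S b z ((n : ℤ) + 1))) 0 1 := by
    rw [T, fromBlocks_multiply, fromBlocks_inj]
    refine ⟨?_, ?_, ?_, ?_⟩ <;> noncomm_ring
  rw [h, det_mul, det_U, one_mul, det_fromBlocks_zero₂₁, det_one, mul_one, det_mul,
    det_transpose]

lemma det_M (a b : ℤ → Matrix (Fin m) (Fin m) ℝ) (ha : ∀ n : ℤ, IsUnit (a n).det) (z : ℂ) :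
    ∀ n : ℕ, (M a b z n).det * (A a (n : ℤ)).det = (A a 0).det
  | 0 => by simp [M_zero]
  | (n + 1) => by
      have hc : ((n + 1 : ℕ) : ℤ) = (n : ℤ) + 1 := by push_cast; ring
      have hAiA : (Ai a ((n : ℤ) + 1)).det * (A a ((n : ℤ) + 1)).det = 1 := by
        have h := congrArg Matrix.det (Ai_mul_A a ha ((n : ℤ) + 1))
        rwa [det_mul, det_one] at h
      rw [M_succ, hc, det_mul, det_T a b z n]
      calc (Ai a ((n : ℤ) + 1)).det * (A a (n : ℤ)).det * (M a b z n).det * (A a ((n : ℤ) + 1)).det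
          = ((Ai a ((n : ℤ) + 1)).det * (A a ((n : ℤ) + 1)).det) *
              ((M a b z n).det * (A a (n : ℤ)).det) := by ring
        _ = (M a b z n).det * (A a (n : ℤ)).det := by rw [hAiA, one_mul]
        _ = (A a 0).det := det_M a b ha z n

end DInvAux

/-- For every `z` and every `τ ≠ 0`, `D(z,τ) = τ^{2m} D(z,τ⁻¹)`. -/
theorem D_inversion_symmetry (m p : ℕ) (hm : 1 ≤ m) (hp : 1 ≤ p)
    (a b : ℤ → Matrix (Fin m) (Fin m) ℝ)
    (ha_per : ∀ n : ℤ, a (n + p) = a n) (hb_per : ∀ n : ℤ, b (n + p) = b n)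
    (hb_sym : ∀ n : ℤ, (b n)ᵀ = b n) (ha_inv : ∀ n : ℤ, IsUnit (a n).det)
    (z τ : ℂ) (hτ : τ ≠ 0) :
    Dfun a b p z τ = τ ^ (2 * m) * Dfun a b p z τ⁻¹ := by
  classical
  have hap : a (p : ℤ) = a 0 := by simpa using ha_per 0
  have hAp : DInvAux.A a (p : ℤ) = DInvAux.A a 0 := by rw [DInvAux.A, DInvAux.A, hap]
  have hne := DInvAux.det_A_ne a ha_inv 0
  have hsymp := DInvAux.M_symp a b hb_sym ha_inv z p
  rw [show DInvAux.J a (p : ℤ) = DInvAux.J a 0 by rw [DInvAux.J, DInvAux.J, hAp]] at hsymp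
  set Mp := DInvAux.M a b z p with hMp
  have hdet1 : Mp.det = 1 := by
    have h := DInvAux.det_M a b ha_inv z p
    rw [hAp] at h
    exact mul_right_cancel₀ hne (by rw [← hMp] at h; rw [h, one_mul])
  set Jm := DInvAux.J a 0 with hJm
  have hdetJ : Jm.det ≠ 0 := by
    have h : Jm = fromBlocks 0 1 (-1) 0 *
        fromBlocks ((DInvAux.A a 0)ᵀ) 0 0 (DInvAux.A a 0) := by
      rw [hJm, DInvAux.J, fromBlocks_multiply, fromBlocks_inj]
      refine ⟨?_, ?_, ?_, ?_⟩ <;> noncomm_ring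
    rw [h, det_mul, DInvAux.det_U, one_mul, det_fromBlocks_zero₂₁, det_transpose]
    exact mul_ne_zero hne hne
  have hMunit : IsUnit Mp.det := by rw [hdet1]; exact isUnit_one
  have hMt : Mpᵀ * Jm = Jm * Mp⁻¹ := by
    have h : Mpᵀ * Jm * Mp * Mp⁻¹ = Jm * Mp⁻¹ := by rw [hsymp]
    rwa [Matrix.mul_assoc, Matrix.mul_nonsing_inv _ hMunit, Matrix.mul_one] at h
  have key : (Mpᵀ - τ • 1) * Jm = Jm * (Mp⁻¹ - τ • 1) := by
    rw [Matrix.sub_mul, Matrix.mul_sub, hMt]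
    congr 1
    rw [Matrix.smul_mul, Matrix.mul_smul, Matrix.one_mul, Matrix.mul_one]
  have hdets : (Mpᵀ - τ • 1).det = (Mp⁻¹ - τ • 1).det := by
    have h := congrArg Matrix.det key
    rw [det_mul, det_mul, mul_comm Jm.det] at h
    exact mul_right_cancel₀ hdetJ h
  have hinv : (Mp⁻¹ - τ • (1 : Matrix (Fin m ⊕ Fin m) (Fin m ⊕ Fin m) ℂ)) =
      Mp⁻¹ * (1 - τ • Mp) := by
    rw [Matrix.mul_sub, Matrix.mul_one, Matrix.mul_smul, Matrix.nonsing_inv_mul _ hMunit]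
  have hdetMi : (Mp⁻¹).det = 1 := by
    rw [Matrix.det_nonsing_inv, hdet1, Ring.inverse_one]
  have hsm : (1 : Matrix (Fin m ⊕ Fin m) (Fin m ⊕ Fin m) ℂ) - τ • Mp =
      (-τ) • (Mp - τ⁻¹ • 1) := by
    rw [smul_sub, smul_smul]
    have h1 : (-τ) * τ⁻¹ = -1 := by field_simp
    rw [h1, neg_smul, neg_smul, one_smul, sub_neg_eq_add]
    abel
  calc Dfun a b p z τ = (Mp - τ • 1).det := rfl
    _ = ((Mp - τ • 1)ᵀ).det := (det_transpose _).symm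
    _ = (Mpᵀ - τ • 1).det := by rw [transpose_sub, transpose_smul, transpose_one]
    _ = (Mp⁻¹ - τ • 1).det := hdets
    _ = (Mp⁻¹).det * (1 - τ • Mp).det := by rw [hinv, det_mul]
    _ = (1 - τ • Mp).det := by rw [hdetMi, one_mul]
    _ = ((-τ) • (Mp - τ⁻¹ • 1)).det := by rw [hsm]
    _ = (-τ) ^ (m + m) * (Mp - τ⁻¹ • 1).det := by
        rw [det_smul, Fintype.card_sum, Fintype.card_fin]
    _ = τ ^ (2 * m) * Dfun a b p z τ⁻¹ := by
        rw [show m + m = 2 * m from (two_mul m).symm, pow_mul, pow_mul, neg_sq]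
        rfl
end

section
/- Fix z ∈ ℂ and τ₀ ∈ ℂ with τ₀ ≠ 0. The multiplicity of τ₀ as a root of the degree-2m polynomial τ ↦ D(z,τ) equals the multiplicity of τ₀⁻¹ as a root of the same polynomial. If moreover z ∈ ℝ, then the multiplicity of the complex conjugate of τ₀ as a root of τ ↦ D(z,τ) also equals the multiplicity of τ₀. -/
open Matrix Polynomial

/-- The degree-`2m` polynomial `τ ↦ D(z,τ) = det(ℳ_p(z) - τ I_{2m})`. -/
noncomputable def DpolyTau {m : ℕ} (a b : ℤ → Matrix (Fin m) (Fin m) ℝ) (p : ℕ) (z : ℂ) :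
    Polynomial ℂ :=
  ((monodromy a b p z).map Polynomial.C -
      (Polynomial.X : Polynomial ℂ) • (1 : Matrix (Fin m ⊕ Fin m) (Fin m ⊕ Fin m) (Polynomial ℂ))).det

/-!
The discrete Wronskian `W(u, v)ₙ = uₙᵀ aₙ vₙ₊₁ - uₙ₊₁ᵀ aₙᵀ vₙ` of two matrix solutions of the
recursion does not depend on `n`, because every `bₙ` is symmetric. Evaluated at `n = p`, where
`a_p = a_0`, on the four pairs of fundamental solutions `θ, φ`, this says `ℳᵀ J ℳ = J` for the
invertible `J = [[0, a₀], [-a₀ᵀ, 0]]`. So `ℳ⁻¹ = J⁻¹ ℳᵀ J` has the characteristic polynomial of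
`ℳ`, while `ℳ⁻¹` has at `τ⁻¹` the generalized eigenspace that `ℳ` has at `τ`; hence `τ` and `τ⁻¹`
have the same algebraic multiplicity. For real `z` the monodromy matrix is real, so
`D(z, ·) = charpoly ℳ` has real coefficients.
-/

theorem Module.End.maxGenEigenspace_inv_eq {K V : Type*} [Field K] [AddCommGroup V] [Module K V]
    {f g : Module.End K V} (hfg : f * g = 1) (hgf : g * f = 1) {μ : K} (hμ : μ ≠ 0) :
    g.maxGenEigenspace μ⁻¹ = f.maxGenEigenspace μ := by
  have hfactor : g - μ⁻¹ • 1 = (-μ⁻¹ • g) * (f - μ • 1) := by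
    rw [mul_sub, smul_mul_assoc, hgf, mul_smul_comm, mul_one]
    match_scalars <;> field_simp
  have hcomm : Commute (-μ⁻¹ • g) (f - μ • 1) :=
    (Commute.sub_right (hgf.trans hfg.symm) ((Commute.one_right g).smul_right μ)).smul_left _
  have hunit : IsUnit (-μ⁻¹ • g) :=
    ⟨⟨_, -μ • f, by simp [smul_smul, hgf, hμ], by simp [smul_smul, hfg, hμ]⟩, rfl⟩
  ext x
  simp only [mem_maxGenEigenspace, hfactor, hcomm.mul_pow, Module.End.mul_apply]
  exact exists_congr fun k =>
    map_eq_zero_iff _ ((Module.End.isUnit_iff _).mp (hunit.pow k)).injective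

namespace Matrix

variable {ι : Type*} [Fintype ι] [DecidableEq ι]

theorem rootMultiplicity_charpoly_inv {K : Type*} [Field K] (M : Matrix ι ι K) (hM : IsUnit M.det)
    {μ : K} (hμ : μ ≠ 0) :
    M⁻¹.charpoly.rootMultiplicity μ⁻¹ = M.charpoly.rootMultiplicity μ := by
  have hMN : M.toLin' * M⁻¹.toLin' = 1 := by
    rw [Module.End.mul_eq_comp, ← toLin'_mul, mul_nonsing_inv _ hM, toLin'_one]; rfl
  have hNM : M⁻¹.toLin' * M.toLin' = 1 := by
    rw [Module.End.mul_eq_comp, ← toLin'_mul, nonsing_inv_mul _ hM, toLin'_one]; rfl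
  rw [← charpoly_toLin', ← charpoly_toLin', ← LinearMap.finrank_maxGenEigenspace_eq,
    ← LinearMap.finrank_maxGenEigenspace_eq, Module.End.maxGenEigenspace_inv_eq hMN hNM hμ]

variable {R : Type*} [CommRing R]

theorem isUnit_det_of_transpose_mul_mul_self {M J : Matrix ι ι R} (hJ : IsUnit J.det)
    (hMJ : Mᵀ * J * M = J) : IsUnit M.det := by
  have h := congrArg det hMJ
  rw [det_mul, det_mul, det_transpose, mul_right_comm] at h
  exact IsUnit.of_mul_eq_one _ (hJ.mul_eq_right.mp h)

theorem charpoly_inv_of_transpose_mul_mul_self {M J : Matrix ι ι R} (hJ : IsUnit J.det)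
    (hMJ : Mᵀ * J * M = J) : M⁻¹.charpoly = M.charpoly := by
  have hinv : M⁻¹ = J⁻¹ * (Mᵀ * J) :=
    inv_eq_left_inv (by rw [mul_assoc, hMJ, nonsing_inv_mul _ hJ])
  rw [hinv, charpoly_mul_comm, mul_assoc, mul_nonsing_inv _ hJ, mul_one, charpoly_transpose]

theorem det_map_C_sub_X_smul_one (A : Matrix ι ι R) :
    (A.map C - (X : R[X]) • 1).det = (-1) ^ Fintype.card ι * A.charpoly := by
  have : A.map C - (X : R[X]) • 1 = -A.charmatrix := by
    rw [charmatrix, neg_sub, smul_one_eq_diagonal, scalar_apply]; rfl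
  rw [this, det_neg, charpoly]

theorem isUnit_det_fromBlocks_zero_zero {B C : Matrix ι ι R} (hB : IsUnit B.det)
    (hC : IsUnit C.det) :
    IsUnit (fromBlocks 0 B C 0).det := by
  refine isUnit_det_of_right_inverse (B := fromBlocks 0 C⁻¹ B⁻¹ 0) ?_
  rw [fromBlocks_multiply, mul_nonsing_inv _ hB, mul_nonsing_inv _ hC]
  simp

end Matrix

section Wronskian

variable {R ι κ κ' : Type*} [CommRing R] [Fintype ι]

def discreteWronskian (A : ℕ → Matrix ι ι R) (u : ℕ → Matrix ι κ R) (v : ℕ → Matrix ι κ' R)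
    (n : ℕ) : Matrix κ κ' R :=
  (u n)ᵀ * A n * v (n + 1) - (u (n + 1))ᵀ * (A n)ᵀ * v n

theorem discreteWronskian_eq_discreteWronskian_zero {A B : ℕ → Matrix ι ι R}
    (hB : ∀ n, (B n)ᵀ = B n) {u : ℕ → Matrix ι κ R} {v : ℕ → Matrix ι κ' R}
    (hu : ∀ n, A (n + 1) * u (n + 2) = B (n + 1) * u (n + 1) - (A n)ᵀ * u n)
    (hv : ∀ n, A (n + 1) * v (n + 2) = B (n + 1) * v (n + 1) - (A n)ᵀ * v n) (n : ℕ) :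
    discreteWronskian A u v n = discreteWronskian A u v 0 := by
  induction n with
  | zero => rfl
  | succ n ih =>
    rw [← ih]
    have hu' : (u (n + 2))ᵀ * (A (n + 1))ᵀ = (u (n + 1))ᵀ * B (n + 1) - (u n)ᵀ * A n := by
      rw [← transpose_mul, hu, transpose_sub, transpose_mul, transpose_mul, hB, transpose_transpose]
    rw [discreteWronskian, discreteWronskian, Matrix.mul_assoc (u (n + 1))ᵀ, hv, hu']
    simp only [Matrix.mul_sub, Matrix.sub_mul, Matrix.mul_assoc]
    abel

end Wronskian

section Jacobi

variable {m : ℕ} (a b : ℤ → Matrix (Fin m) (Fin m) ℝ) (z : ℂ)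

theorem matSol_recurrence (ha_inv : ∀ n : ℤ, IsUnit (a n).det) (y0 y1 : Matrix (Fin m) (Fin m) ℂ)
    (n : ℕ) :
    (a (n + 1 : ℕ)).map Complex.ofReal * matSol a b z y0 y1 (n + 2) =
      (z • 1 - (b (n + 1 : ℕ)).map Complex.ofReal) * matSol a b z y0 y1 (n + 1) -
        ((a n).map Complex.ofReal)ᵀ * matSol a b z y0 y1 n := by
  have hinv : (a (n + 1 : ℕ)).map Complex.ofReal * ((a (n + 1 : ℕ))⁻¹).map Complex.ofReal = 1 := by
    have h := (Matrix.map_mul (f := Complex.ofRealHom) (L := a (n + 1 : ℕ))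
      (M := (a (n + 1 : ℕ))⁻¹)).symm
    rw [mul_nonsing_inv _ (ha_inv _), Matrix.map_one _ (map_zero _) (map_one _)] at h
    exact h
  rw [matSol, ← Matrix.mul_assoc]
  exact (congrArg (· * _) hinv).trans (Matrix.one_mul _)

theorem discreteWronskian_matSol (ha_inv : ∀ n : ℤ, IsUnit (a n).det)
    (hb_sym : ∀ n : ℤ, (b n)ᵀ = b n) (y0 y1 w0 w1 : Matrix (Fin m) (Fin m) ℂ) (n : ℕ) :
    discreteWronskian (fun k : ℕ => (a k).map Complex.ofReal) (matSol a b z y0 y1)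
        (matSol a b z w0 w1) n =
      y0ᵀ * (a 0).map Complex.ofReal * w1 - y1ᵀ * ((a 0).map Complex.ofReal)ᵀ * w0 := by
  refine discreteWronskian_eq_discreteWronskian_zero
    (B := fun k : ℕ => z • 1 - (b k).map Complex.ofReal) ?_
    (matSol_recurrence a b z ha_inv y0 y1) (matSol_recurrence a b z ha_inv w0 w1) n
  intro k
  rw [transpose_sub, transpose_smul, transpose_one, ← transpose_map, hb_sym]

noncomputable def wronskianForm : Matrix (Fin m ⊕ Fin m) (Fin m ⊕ Fin m) ℂ :=
  fromBlocks 0 ((a 0).map Complex.ofReal) (-((a 0).map Complex.ofReal)ᵀ) 0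

theorem isUnit_det_wronskianForm (ha_inv : ∀ n : ℤ, IsUnit (a n).det) :
    IsUnit (wronskianForm a).det := by
  have h : IsUnit ((a 0).map Complex.ofReal).det := by
    rw [show ((a 0).map Complex.ofReal).det = ((a 0).det : ℂ) from
      (RingHom.map_det Complex.ofRealHom _).symm]
    exact (ha_inv 0).map Complex.ofRealHom
  refine isUnit_det_fromBlocks_zero_zero h ?_
  rw [det_neg, det_transpose]
  exact (isUnit_one.neg.pow _).mul h

theorem monodromy_transpose_mul_wronskianForm_mul_self (p : ℕ)
    (ha_per : ∀ n : ℤ, a (n + p) = a n) (ha_inv : ∀ n : ℤ, IsUnit (a n).det)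
    (hb_sym : ∀ n : ℤ, (b n)ᵀ = b n) :
    (monodromy a b p z)ᵀ * wronskianForm a * monodromy a b p z = wronskianForm a := by
  have W := fun y0 y1 w0 w1 => discreteWronskian_matSol a b z ha_inv hb_sym y0 y1 w0 w1 p
  have hap : a p = a 0 := by simpa using ha_per 0
  simp only [discreteWronskian, hap] at W
  rw [monodromy, wronskianForm, fromBlocks_transpose, fromBlocks_multiply, fromBlocks_multiply]
  refine fromBlocks_inj.mpr ⟨?_, ?_, ?_, ?_⟩
  · simpa [neg_add_eq_sub] using W 1 0 1 0
  · simpa [neg_add_eq_sub] using W 1 0 0 1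
  · simpa [neg_add_eq_sub] using W 0 1 1 0
  · simpa [neg_add_eq_sub] using W 0 1 0 1

theorem matSol_map_conj (y0 y1 : Matrix (Fin m) (Fin m) ℂ) :
    ∀ n, (matSol a b z y0 y1 n).map (starRingEnd ℂ) =
      matSol a b (starRingEnd ℂ z) (y0.map (starRingEnd ℂ)) (y1.map (starRingEnd ℂ)) n
  | 0 => rfl
  | 1 => rfl
  | n + 2 => by
    rw [matSol, matSol, ← matSol_map_conj y0 y1 n, ← matSol_map_conj y0 y1 (n + 1)]
    have hreal (A : Matrix (Fin m) (Fin m) ℝ) :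
        (A.map Complex.ofReal).map (starRingEnd ℂ) = A.map Complex.ofReal := by
      ext; simp
    have hsmul : (z • 1 : Matrix (Fin m) (Fin m) ℂ).map (starRingEnd ℂ) = starRingEnd ℂ z • 1 := by
      rw [smul_one_eq_diagonal, diagonal_map (map_zero _), smul_one_eq_diagonal]
    simp only [← RingHom.mapMatrix_apply, map_mul, map_sub]
    simp only [RingHom.mapMatrix_apply, hreal, hsmul, ← transpose_map]

theorem monodromy_map_conj (p : ℕ) :
    (monodromy a b p z).map (starRingEnd ℂ) = monodromy a b p (starRingEnd ℂ z) := by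
  simp only [monodromy, fromBlocks_map, matSol_map_conj,
    Matrix.map_one _ (map_zero _) (map_one _), Matrix.map_zero _ (map_zero _)]

theorem DpolyTau_eq_charpoly (p : ℕ) : DpolyTau a b p z = (monodromy a b p z).charpoly := by
  rw [DpolyTau, det_map_C_sub_X_smul_one, Fintype.card_sum, Fintype.card_fin, ← two_mul, pow_mul,
    neg_one_sq, one_pow, one_mul]

end Jacobi

theorem multiplier_multiplicities_general (m p : ℕ)
    (a b : ℤ → Matrix (Fin m) (Fin m) ℝ)
    (ha_per : ∀ n : ℤ, a (n + p) = a n)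
    (hb_sym : ∀ n : ℤ, (b n)ᵀ = b n) (ha_inv : ∀ n : ℤ, IsUnit (a n).det)
    (z : ℂ) (τ₀ : ℂ) (hτ₀ : τ₀ ≠ 0) :
    (DpolyTau a b p z).rootMultiplicity τ₀ = (DpolyTau a b p z).rootMultiplicity τ₀⁻¹ ∧
    (z.im = 0 →
      (DpolyTau a b p z).rootMultiplicity ((starRingEnd ℂ) τ₀) =
        (DpolyTau a b p z).rootMultiplicity τ₀) := by
  have hJ := isUnit_det_wronskianForm a ha_inv
  have hsympl := monodromy_transpose_mul_wronskianForm_mul_self a b z p ha_per ha_inv hb_sym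
  rw [DpolyTau_eq_charpoly]
  refine ⟨?_, fun hz => ?_⟩
  · rw [← rootMultiplicity_charpoly_inv _ (isUnit_det_of_transpose_mul_mul_self hJ hsympl) hτ₀,
      charpoly_inv_of_transpose_mul_mul_self hJ hsympl]
  · have hz_real : starRingEnd ℂ z = z := Complex.conj_eq_iff_im.mpr hz
    have hreal :
        (monodromy a b p z).charpoly.map (starRingEnd ℂ) = (monodromy a b p z).charpoly := by
      rw [← charpoly_map, monodromy_map_conj, hz_real]
    rw [eq_rootMultiplicity_map (starRingEnd ℂ).injective τ₀, hreal]

/-- The multiplicity of `τ₀ ≠ 0` as a root of `τ ↦ D(z,τ)` equals that of `τ₀⁻¹`;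
and if `z` is real, the multiplicity of the conjugate of `τ₀` equals that of `τ₀`. -/
theorem multiplier_multiplicities (m p : ℕ) (hm : 1 ≤ m) (hp : 1 ≤ p)
    (a b : ℤ → Matrix (Fin m) (Fin m) ℝ)
    (ha_per : ∀ n : ℤ, a (n + p) = a n) (hb_per : ∀ n : ℤ, b (n + p) = b n)
    (hb_sym : ∀ n : ℤ, (b n)ᵀ = b n) (ha_inv : ∀ n : ℤ, IsUnit (a n).det)
    (z : ℂ) (τ₀ : ℂ) (hτ₀ : τ₀ ≠ 0) :
    (DpolyTau a b p z).rootMultiplicity τ₀ = (DpolyTau a b p z).rootMultiplicity τ₀⁻¹ ∧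
    (z.im = 0 →
      (DpolyTau a b p z).rootMultiplicity ((starRingEnd ℂ) τ₀) =
        (DpolyTau a b p z).rootMultiplicity τ₀) :=
  multiplier_multiplicities_general m p a b ha_per hb_sym ha_inv z τ₀ hτ₀
end

section
/- Let z₀ ∈ ℝ and let τ₀ ∈ ℂ with |τ₀| = 1 be a simple root of the polynomial τ ↦ D(z₀,τ). Then ∂D/∂z(z₀,τ₀) ≠ 0 (equivalently, the analytic multiplier branch τ(z) through τ₀ defined by the implicit function theorem satisfies τ′(z₀) ≠ 0). -/
/-!
Let `ψ` be an eigenvector of the monodromy matrix `M = ℳ_p(z₀)` for `τ₀`, and put `A₀ = M - τ₀`.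
Because the coefficients are real with `b_n` symmetric, the Wronskian of two solutions of the
recursion is constant; in terms of initial data this says that `M(z)` preserves the bilinear
form `Ω(d, e) = d₀ ⬝ a₀ e₁ - d₁ ⬝ a₀ᵀ e₀` for every `z`. For real `z₀` the conjugate `ψ̄` is an
eigenvector for `τ̄₀`, so `|τ₀| = 1` makes `w = Ω(ψ̄, ·)` a left null vector of `A₀`.

At a singular matrix with left and right null vectors `w` and `ψ`, the derivative of `det N`
along any polynomial path `N` through `A₀` is `κ · w N' ψ` with a constant `κ` independent of the
path. Along `τ ↦ M - τ` this derivative is `∂_τ D(z₀, τ₀) ≠ 0`, so `κ ≠ 0`. Along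
`z ↦ ℳ_p(z) - τ₀` it is `κ · w ℳ_p'(z₀) ψ`, and since the `z`-derivative of a solution solves the
recursion with that solution as source term, Green's identity gives
`w ℳ_p'(z₀) ψ = τ₀ ∑_{k=1}^{p} |u_k|²`, where `u` is the solution with initial data `ψ`.
This sum vanishes only if `u_1 = 0` and `u_p = τ₀ u_0 = 0`, i.e. only if `ψ = 0`.
-/

open Matrix Polynomial

noncomputable def evalDeriv {ι κ R : Type*} [CommRing R] (x : R) (N : Matrix ι κ R[X]) :
    Matrix ι κ R :=
  N.map fun q => (derivative q).eval x

section PolynomialMatrix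

variable {ι κ ν R : Type*} [CommRing R] (x : R)

lemma map_eval_map_C (M : Matrix ι κ R) : (M.map C).map (eval x) = M := by
  ext; simp

lemma map_eval_X_smul_one [DecidableEq ι] :
    ((X : R[X]) • (1 : Matrix ι ι R[X])).map (eval x) = x • 1 := by
  ext i j; by_cases h : i = j <;> simp [h, one_apply]

lemma map_eval_mul [Fintype κ] (M : Matrix ι κ R[X]) (N : Matrix κ ν R[X]) :
    (M * N).map (eval x) = M.map (eval x) * N.map (eval x) :=
  Matrix.map_mul (f := evalRingHom x)

lemma map_eval_sub (M N : Matrix ι κ R[X]) :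
    (M - N).map (eval x) = M.map (eval x) - N.map (eval x) :=
  Matrix.map_sub _ (fun p q => eval_sub p q x) M N

lemma evalDeriv_mul [Fintype κ] (M : Matrix ι κ R[X]) (N : Matrix κ ν R[X]) :
    evalDeriv x (M * N) = evalDeriv x M * N.map (eval x) + M.map (eval x) * evalDeriv x N := by
  ext i j
  simp [evalDeriv, mul_apply, eval_finsetSum, Finset.sum_add_distrib]

lemma evalDeriv_sub (M N : Matrix ι κ R[X]) :
    evalDeriv x (M - N) = evalDeriv x M - evalDeriv x N := by
  ext; simp [evalDeriv]

lemma evalDeriv_map_C (M : Matrix ι κ R) : evalDeriv x (M.map C) = 0 := by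
  ext; simp [evalDeriv]

lemma evalDeriv_X_smul_one [DecidableEq ι] :
    evalDeriv x ((X : R[X]) • (1 : Matrix ι ι R[X])) = 1 := by
  ext i j; by_cases h : i = j <;> simp [evalDeriv, h, one_apply]

lemma evalDeriv_fromCols (M₁ : Matrix ι κ R[X]) (M₂ : Matrix ι ν R[X]) :
    evalDeriv x (fromCols M₁ M₂) = fromCols (evalDeriv x M₁) (evalDeriv x M₂) :=
  fromCols_map ..

lemma evalDeriv_fromRows (M₁ : Matrix κ ι R[X]) (M₂ : Matrix ν ι R[X]) :
    evalDeriv x (fromRows M₁ M₂) = fromRows (evalDeriv x M₁) (evalDeriv x M₂) :=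
  fromRows_map ..

end PolynomialMatrix

section DetDerivative

variable {ι : Type*} [Fintype ι] [DecidableEq ι]

lemma det_one_updateRow {R : Type*} [CommRing R] (r : ι) (w : ι → R) :
    ((1 : Matrix ι ι R).updateRow r w).det = w r := by
  rw [← det_transpose, ← updateCol_transpose, transpose_one, ← cramer_apply, cramer_one]
  rfl

lemma det_one_updateCol {R : Type*} [CommRing R] (c : ι) (ψ : ι → R) :
    ((1 : Matrix ι ι R).updateCol c ψ).det = ψ c := by
  rw [← cramer_apply, cramer_one]
  rfl

/-- Expand `det N` along row `r`: at `x` every term vanishes except the derivative of `N r c`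
times its cofactor, because the other cofactors contain the column `c`, which is zero at `x`. -/
lemma eval_derivative_det_of_eval_row_col_eq_zero {R : Type*} [CommRing R]
    (N : Matrix ι ι R[X]) (x : R) {r c : ι}
    (hrow : ∀ j, (N r j).eval x = 0) (hcol : ∀ i, (N i c).eval x = 0) :
    (derivative N.det).eval x = (derivative (N r c)).eval x * adjugate (N.map (eval x)) c r := by
  have hadj : ∀ j ≠ c, adjugate (N.map (eval x)) j r = 0 := by
    intro j hj
    rw [adjugate_apply]
    refine det_eq_zero_of_column_eq_zero c fun i => ?_
    by_cases hi : i = r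
    · simp [hi, Ne.symm hj]
    · simp [updateRow_ne hi, hcol]
  have hmap (i j : ι) : (adjugate N i j).eval x = adjugate (N.map (eval x)) i j :=
    congrFun (congrFun (RingHom.map_adjugate (evalRingHom x) N) i) j
  rw [det_eq_sum_mul_adjugate_row N r, derivative_sum, eval_finsetSum,
    Finset.sum_eq_single c (fun j _ hj => ?_) (by simp)]
  · simp [derivative_mul, hrow, hmap]
  · simp [derivative_mul, hrow, hmap, hadj j hj]

/-- Conjugating `N` by `Q = 1` with row `r` replaced by `w` and `P = 1` with column `c` replaced
by `ψ` makes row `r` and column `c` vanish at `x`, and turns the `(r, c)` entry into `w N ψ`. -/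
theorem exists_eval_derivative_det_eq_mul_dotProduct {K : Type*} [Field K] (A : Matrix ι ι K)
    {w ψ : ι → K} (hw : w ᵥ* A = 0) (hψ : A *ᵥ ψ = 0) (hw0 : w ≠ 0) (hψ0 : ψ ≠ 0) :
    ∃ κ : K, ∀ (x : K) (N : Matrix ι ι K[X]), N.map (eval x) = A →
      (derivative N.det).eval x = κ * (w ⬝ᵥ evalDeriv x N *ᵥ ψ) := by
  obtain ⟨r, hr⟩ : ∃ r, w r ≠ 0 := Function.ne_iff.mp hw0
  obtain ⟨c, hc⟩ : ∃ c, ψ c ≠ 0 := Function.ne_iff.mp hψ0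
  set Q := (1 : Matrix ι ι K).updateRow r w
  set P := (1 : Matrix ι ι K).updateCol c ψ
  refine ⟨adjugate (Q * A * P) c r / (w r * ψ c), fun x N hN => ?_⟩
  have hQ (M : Matrix ι ι K) (j : ι) : (Q * M * P) r j = (w ᵥ* M ᵥ* P) j := by
    simp [Q, mul_apply_eq_vecMul]
  have hP (M : Matrix ι ι K) (i : ι) : (Q * M * P) i c = (Q *ᵥ (M *ᵥ ψ)) i := by
    simp only [P, mul_apply, updateCol_self, mulVec_mulVec]
    rfl
  set N' := Q.map C * N * P.map C
  have hN' : N'.map (eval x) = Q * A * P := by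
    simp only [N', map_eval_mul, map_eval_map_C, hN]
  have hN'_deriv : evalDeriv x N' = Q * evalDeriv x N * P := by
    simp only [N', evalDeriv_mul, evalDeriv_map_C, map_eval_map_C, Matrix.zero_mul,
      Matrix.mul_zero, zero_add, add_zero]
  have hdet : N'.det = C (w r * ψ c) * N.det := by
    have hC (M : Matrix ι ι K) : (M.map C).det = C M.det := (RingHom.map_det C M).symm
    rw [det_mul, det_mul, hC, hC, det_one_updateRow, det_one_updateCol, C_mul]
    ring
  have hrow (j : ι) : (N' r j).eval x = 0 := by
    simpa [hw] using congrFun (congrFun hN' r) j |>.trans (hQ A j)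
  have hcol (i : ι) : (N' i c).eval x = 0 := by
    simpa [hψ] using congrFun (congrFun hN' i) c |>.trans (hP A i)
  have hentry : (derivative (N' r c)).eval x = w ⬝ᵥ evalDeriv x N *ᵥ ψ := by
    change evalDeriv x N' r c = _
    rw [hN'_deriv, hP]
    simp only [mulVec, Q, updateRow_self]
  have key := eval_derivative_det_of_eval_row_col_eq_zero N' x hrow hcol
  rw [hdet, hN', hentry, derivative_C_mul, eval_C_mul] at key
  rw [div_mul_eq_mul_div, eq_div_iff (mul_ne_zero hr hc)]
  linear_combination key

end DetDerivative

section JacobiWronskian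

variable {ι R : Type*} [Fintype ι] [CommRing R]

def SolvesJacobi (A S : ℕ → Matrix ι ι R) (s f : ℕ → ι → R) : Prop :=
  ∀ k, A (k + 1) *ᵥ f (k + 2) = S (k + 1) *ᵥ f (k + 1) - (A k)ᵀ *ᵥ f k + s (k + 1)

def jacobiForm (A : Matrix ι ι R) : Matrix (ι ⊕ ι) (ι ⊕ ι) R :=
  fromBlocks 0 A (-Aᵀ) 0

lemma isUnit_jacobiForm [DecidableEq ι] {A : Matrix ι ι R} (hA : IsUnit A.det) :
    IsUnit (jacobiForm A) := by
  have hAT : IsUnit Aᵀ.det := by rwa [det_transpose]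
  refine (isUnit_iff_isUnit_det _).mpr
    (isUnit_det_of_right_inverse (B := fromBlocks 0 (-(Aᵀ)⁻¹) A⁻¹ 0) ?_)
  simp [jacobiForm, fromBlocks_multiply, mul_nonsing_inv _ hA, mul_nonsing_inv _ hAT]

def jacobiWronskian (A : ℕ → Matrix ι ι R) (f h : ℕ → ι → R) (n : ℕ) : R :=
  Sum.elim (f n) (f (n + 1)) ⬝ᵥ (jacobiForm (A n) *ᵥ Sum.elim (h n) (h (n + 1)))

lemma jacobiWronskian_eq (A : ℕ → Matrix ι ι R) (f h : ℕ → ι → R) (n : ℕ) :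
    jacobiWronskian A f h n = f n ⬝ᵥ (A n *ᵥ h (n + 1)) - f (n + 1) ⬝ᵥ ((A n)ᵀ *ᵥ h n) := by
  simp [jacobiWronskian, jacobiForm, fromBlocks_mulVec, sumElim_dotProduct_sumElim,
    sub_eq_add_neg, neg_mulVec]

variable {A S : ℕ → Matrix ι ι R} {f h s : ℕ → ι → R}

lemma jacobiWronskian_succ (hS : ∀ k, (S k)ᵀ = S k) (hf : SolvesJacobi A S 0 f)
    (hh : SolvesJacobi A S s h) (n : ℕ) :
    jacobiWronskian A f h (n + 1) = jacobiWronskian A f h n + f (n + 1) ⬝ᵥ s (n + 1) := by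
  have hSf : h (n + 1) ⬝ᵥ (S (n + 1) *ᵥ f (n + 1)) = f (n + 1) ⬝ᵥ (S (n + 1) *ᵥ h (n + 1)) := by
    simpa [hS] using (dotProduct_transpose_mulVec (S (n + 1)) (f (n + 1)) (h (n + 1))).symm
  rw [jacobiWronskian_eq, jacobiWronskian_eq, dotProduct_transpose_mulVec, hh n, hf n]
  simp only [Pi.zero_apply, add_zero, dotProduct_add, dotProduct_sub, hSf,
    dotProduct_transpose_mulVec (A n)]
  ring

lemma jacobiWronskian_eq_add_sum (hS : ∀ k, (S k)ᵀ = S k) (hf : SolvesJacobi A S 0 f)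
    (hh : SolvesJacobi A S s h) (n : ℕ) :
    jacobiWronskian A f h n =
      jacobiWronskian A f h 0 + ∑ k ∈ Finset.range n, f (k + 1) ⬝ᵥ s (k + 1) := by
  induction n with
  | zero => simp
  | succ n ih => rw [jacobiWronskian_succ hS hf hh, ih, Finset.sum_range_succ, add_assoc]

end JacobiWronskian

lemma map_ofReal_mul_map_ofReal_nonsing_inv {ι : Type*} [Fintype ι] [DecidableEq ι]
    {M : Matrix ι ι ℝ} (hM : IsUnit M.det) :
    M.map Complex.ofReal * M⁻¹.map Complex.ofReal = 1 := by
  change M.map Complex.ofRealHom * M⁻¹.map Complex.ofRealHom = 1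
  rw [← Matrix.map_mul, mul_nonsing_inv _ hM]
  simp

section JacobiSolutions

variable {m : ℕ} (a b : ℤ → Matrix (Fin m) (Fin m) ℝ)

noncomputable def coeffA (k : ℕ) : Matrix (Fin m) (Fin m) ℂ := (a k).map Complex.ofReal

noncomputable def coeffS (z : ℂ) (k : ℕ) : Matrix (Fin m) (Fin m) ℂ :=
  z • 1 - (b k).map Complex.ofReal

noncomputable def coeffSPoly (k : ℕ) : Matrix (Fin m) (Fin m) ℂ[X] :=
  (X : ℂ[X]) • 1 - ((b k).map Complex.ofReal).map C

noncomputable def matSolPoly (y0 y1 : Matrix (Fin m) (Fin m) ℂ) :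
    ℕ → Matrix (Fin m) (Fin m) ℂ[X]
  | 0 => y0.map C
  | 1 => y1.map C
  | n + 2 =>
      (((a ((n : ℤ) + 1))⁻¹).map Complex.ofReal).map C *
        (((X : ℂ[X]) • (1 : Matrix (Fin m) (Fin m) ℂ[X]) -
            ((b ((n : ℤ) + 1)).map Complex.ofReal).map C) * matSolPoly y0 y1 (n + 1) -
          (((a (n : ℤ)).map Complex.ofReal)ᵀ).map C * matSolPoly y0 y1 n)

noncomputable def fundPoly (n : ℕ) : Matrix (Fin m) (Fin m ⊕ Fin m) ℂ[X] :=
  fromCols (matSolPoly a b 1 0 n) (matSolPoly a b 0 1 n)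

/-- The `m × 2m` matrix `[θ_n(z) φ_n(z)]`. -/
noncomputable def fundSol (z : ℂ) (n : ℕ) : Matrix (Fin m) (Fin m ⊕ Fin m) ℂ :=
  fromCols (matSol a b z 1 0 n) (matSol a b z 0 1 n)

variable {a b}

lemma map_eval_coeffSPoly (z : ℂ) (k : ℕ) : (coeffSPoly b k).map (eval z) = coeffS b z k := by
  ext i j; by_cases h : i = j <;> simp [coeffSPoly, coeffS, h, one_apply]

lemma evalDeriv_coeffSPoly (z : ℂ) (k : ℕ) : evalDeriv z (coeffSPoly b k) = 1 := by
  rw [coeffSPoly, evalDeriv_sub, evalDeriv_X_smul_one, evalDeriv_map_C, sub_zero]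

lemma coeffS_transpose (hb_sym : ∀ n : ℤ, (b n)ᵀ = b n) (z : ℂ) (k : ℕ) :
    (coeffS b z k)ᵀ = coeffS b z k := by
  rw [coeffS, transpose_sub, transpose_smul, transpose_one, ← transpose_map, hb_sym]

lemma isUnit_det_coeffA (ha_inv : ∀ n : ℤ, IsUnit (a n).det) (k : ℕ) :
    IsUnit (coeffA a k).det :=
  (RingHom.map_det Complex.ofRealHom (a k)).symm ▸ (ha_inv k).map _

lemma map_eval_matSolPoly (z : ℂ) (y0 y1 : Matrix (Fin m) (Fin m) ℂ) (n : ℕ) :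
    (matSolPoly a b y0 y1 n).map (eval z) = matSol a b z y0 y1 n := by
  induction n using Nat.twoStepInduction with
  | zero => exact map_eval_map_C z y0
  | one => exact map_eval_map_C z y1
  | more n ih1 ih2 =>
    have hE (M : Matrix (Fin m) (Fin m) ℂ[X]) : M.map (eval z) = (evalRingHom z).mapMatrix M :=
      rfl
    simp only [matSolPoly, matSol, hE, map_mul, map_sub]
    simp only [← hE, ih1, ih2, map_eval_X_smul_one, map_eval_map_C]

lemma matSolPoly_rec (ha_inv : ∀ n : ℤ, IsUnit (a n).det) (y0 y1 : Matrix (Fin m) (Fin m) ℂ)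
    (k : ℕ) :
    (coeffA a (k + 1)).map C * matSolPoly a b y0 y1 (k + 2) =
      coeffSPoly b (k + 1) * matSolPoly a b y0 y1 (k + 1) -
        ((coeffA a k)ᵀ).map C * matSolPoly a b y0 y1 k := by
  have hinv : (coeffA a (k + 1)).map C * (((a ((k : ℤ) + 1))⁻¹).map Complex.ofReal).map C = 1 := by
    rw [← Matrix.map_mul, coeffA, Nat.cast_succ,
      map_ofReal_mul_map_ofReal_nonsing_inv (ha_inv _)]
    simp
  rw [matSolPoly, ← Matrix.mul_assoc, hinv, Matrix.one_mul, coeffSPoly, coeffA]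
  push_cast
  rfl

lemma map_star_matSol (x : ℝ) (y0 y1 : Matrix (Fin m) (Fin m) ℂ) (n : ℕ) :
    (starRingEnd ℂ).mapMatrix (matSol a b x y0 y1 n) =
      matSol a b x ((starRingEnd ℂ).mapMatrix y0) ((starRingEnd ℂ).mapMatrix y1) n := by
  induction n using Nat.twoStepInduction with
  | zero => rfl
  | one => rfl
  | more n ih1 ih2 =>
    have hR (M : Matrix (Fin m) (Fin m) ℝ) :
        (starRingEnd ℂ).mapMatrix (M.map Complex.ofReal) = M.map Complex.ofReal := by
      ext; simp
    have hx : (starRingEnd ℂ).mapMatrix ((x : ℂ) • (1 : Matrix (Fin m) (Fin m) ℂ)) =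
        (x : ℂ) • 1 := by
      ext i j; by_cases h : i = j <;> simp [h, one_apply]
    rw [matSol, matSol]
    simp only [map_mul, map_sub, ih1, ih2, hR, hx, ← transpose_map]

lemma map_eval_fundPoly (z : ℂ) (n : ℕ) : (fundPoly a b n).map (eval z) = fundSol a b z n := by
  rw [fundPoly, fundSol, fromCols_map, map_eval_matSolPoly, map_eval_matSolPoly]

lemma fundSol_zero_mulVec (z : ℂ) (c : Fin m ⊕ Fin m → ℂ) :
    fundSol a b z 0 *ᵥ c = c ∘ Sum.inl := by
  simp [fundSol, matSol]

lemma fundSol_one_mulVec (z : ℂ) (c : Fin m ⊕ Fin m → ℂ) :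
    fundSol a b z 1 *ᵥ c = c ∘ Sum.inr := by
  simp [fundSol, matSol]

lemma evalDeriv_fundPoly_zero (z : ℂ) : evalDeriv z (fundPoly a b 0) = 0 := by
  rw [fundPoly, evalDeriv_fromCols, matSolPoly, matSolPoly, evalDeriv_map_C, evalDeriv_map_C,
    fromCols_zero]

lemma evalDeriv_fundPoly_one (z : ℂ) : evalDeriv z (fundPoly a b 1) = 0 := by
  rw [fundPoly, evalDeriv_fromCols, matSolPoly, matSolPoly, evalDeriv_map_C, evalDeriv_map_C,
    fromCols_zero]

lemma fundPoly_rec (ha_inv : ∀ n : ℤ, IsUnit (a n).det) (k : ℕ) :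
    (coeffA a (k + 1)).map C * fundPoly a b (k + 2) =
      coeffSPoly b (k + 1) * fundPoly a b (k + 1) - ((coeffA a k)ᵀ).map C * fundPoly a b k := by
  ext i (j | j) <;> simp [fundPoly, matSolPoly_rec ha_inv]

lemma fundSol_rec (ha_inv : ∀ n : ℤ, IsUnit (a n).det) (z : ℂ) (k : ℕ) :
    coeffA a (k + 1) * fundSol a b z (k + 2) =
      coeffS b z (k + 1) * fundSol a b z (k + 1) - (coeffA a k)ᵀ * fundSol a b z k := by
  have h := congrArg (Matrix.map · (eval z)) (fundPoly_rec (b := b) ha_inv k)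
  simpa only [map_eval_mul, map_eval_sub, map_eval_map_C, map_eval_coeffSPoly,
    map_eval_fundPoly] using h

lemma evalDeriv_fundPoly_rec (ha_inv : ∀ n : ℤ, IsUnit (a n).det) (z : ℂ) (k : ℕ) :
    coeffA a (k + 1) * evalDeriv z (fundPoly a b (k + 2)) =
      coeffS b z (k + 1) * evalDeriv z (fundPoly a b (k + 1)) -
        (coeffA a k)ᵀ * evalDeriv z (fundPoly a b k) + fundSol a b z (k + 1) := by
  have h := congrArg (evalDeriv z) (fundPoly_rec (b := b) ha_inv k)
  simp only [evalDeriv_mul, evalDeriv_sub, evalDeriv_map_C, evalDeriv_coeffSPoly, map_eval_map_C,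
    map_eval_coeffSPoly, map_eval_fundPoly, Matrix.zero_mul, zero_add, Matrix.one_mul] at h
  rw [h]
  abel

lemma solvesJacobi_fundSol_mulVec (ha_inv : ∀ n : ℤ, IsUnit (a n).det) (z : ℂ)
    (c : Fin m ⊕ Fin m → ℂ) :
    SolvesJacobi (coeffA a) (coeffS b z) 0 (fun n => fundSol a b z n *ᵥ c) := by
  intro k
  simp only [mulVec_mulVec, fundSol_rec ha_inv, sub_mulVec, Pi.zero_apply, add_zero]

lemma solvesJacobi_evalDeriv_fundPoly_mulVec (ha_inv : ∀ n : ℤ, IsUnit (a n).det) (z : ℂ)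
    (c : Fin m ⊕ Fin m → ℂ) :
    SolvesJacobi (coeffA a) (coeffS b z) (fun n => fundSol a b z n *ᵥ c)
      (fun n => evalDeriv z (fundPoly a b n) *ᵥ c) := by
  intro k
  simp only [mulVec_mulVec, evalDeriv_fundPoly_rec ha_inv, add_mulVec, sub_mulVec]

lemma star_fundSol_mulVec (x : ℝ) (c : Fin m ⊕ Fin m → ℂ) (n : ℕ) :
    star (fundSol a b x n *ᵥ c) = fundSol a b x n *ᵥ star c := by
  have hreal (y0 y1 : Matrix (Fin m) (Fin m) ℂ) (h0 : (starRingEnd ℂ).mapMatrix y0 = y0)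
      (h1 : (starRingEnd ℂ).mapMatrix y1 = y1) (i j : Fin m) :
      star (matSol a b x y0 y1 n i j) = matSol a b x y0 y1 n i j := by
    simpa [h0, h1] using congrFun (congrFun (map_star_matSol x y0 y1 n) i) j
  ext i
  simp [mulVec, dotProduct, star_sum, fundSol, hreal 1 0 (map_one _) (map_zero _),
    hreal 0 1 (map_zero _) (map_one _)]

end JacobiSolutions

section Monodromy

variable {m : ℕ} {a b : ℤ → Matrix (Fin m) (Fin m) ℝ} {p : ℕ}

variable (a b p) in
noncomputable def monodromyPoly : Matrix (Fin m ⊕ Fin m) (Fin m ⊕ Fin m) ℂ[X] :=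
  fromRows (fundPoly a b p) (fundPoly a b (p + 1))

lemma monodromy_eq_fromRows (z : ℂ) :
    monodromy a b p z = fromRows (fundSol a b z p) (fundSol a b z (p + 1)) := by
  rw [monodromy, fundSol, fundSol, fromRows_fromCols_eq_fromBlocks]

lemma map_eval_monodromyPoly (z : ℂ) :
    (monodromyPoly a b p).map (eval z) = monodromy a b p z := by
  rw [monodromyPoly, fromRows_map, map_eval_fundPoly, map_eval_fundPoly, monodromy_eq_fromRows]

lemma monodromy_mulVec (z : ℂ) (c : Fin m ⊕ Fin m → ℂ) :
    monodromy a b p z *ᵥ c = Sum.elim (fundSol a b z p *ᵥ c) (fundSol a b z (p + 1) *ᵥ c) := by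
  rw [monodromy_eq_fromRows, fromRows_mulVec]

lemma evalDeriv_monodromyPoly_mulVec (z : ℂ) (c : Fin m ⊕ Fin m → ℂ) :
    evalDeriv z (monodromyPoly a b p) *ᵥ c =
      Sum.elim (evalDeriv z (fundPoly a b p) *ᵥ c) (evalDeriv z (fundPoly a b (p + 1)) *ᵥ c) := by
  rw [monodromyPoly, evalDeriv_fromRows, fromRows_mulVec]

lemma monodromy_mulVec_star (x : ℝ) (c : Fin m ⊕ Fin m → ℂ) :
    monodromy a b p x *ᵥ star c = star (monodromy a b p x *ᵥ c) := by
  rw [monodromy_mulVec, monodromy_mulVec, ← star_fundSol_mulVec, ← star_fundSol_mulVec]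
  ext (i | i) <;> rfl

lemma Dfun_eq_eval (z τ : ℂ) :
    Dfun a b p z τ = (monodromyPoly a b p - (τ • 1 : Matrix _ _ ℂ).map C).det.eval z := by
  rw [← coe_evalRingHom, RingHom.map_det, RingHom.mapMatrix_apply, coe_evalRingHom, map_eval_sub,
    map_eval_monodromyPoly, map_eval_map_C, Dfun]

lemma eval_DpolyTau (z τ : ℂ) : (DpolyTau a b p z).eval τ = Dfun a b p z τ := by
  rw [DpolyTau, ← coe_evalRingHom, RingHom.map_det, RingHom.mapMatrix_apply, coe_evalRingHom,
    map_eval_sub, map_eval_map_C, map_eval_X_smul_one, Dfun]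

theorem monodromy_mulVec_dotProduct_jacobiForm (ha_inv : ∀ n : ℤ, IsUnit (a n).det)
    (hb_sym : ∀ n : ℤ, (b n)ᵀ = b n) (hap : a p = a 0) (z : ℂ) (d e : Fin m ⊕ Fin m → ℂ) :
    (monodromy a b p z *ᵥ d) ⬝ᵥ (jacobiForm (coeffA a 0) *ᵥ (monodromy a b p z *ᵥ e)) =
      d ⬝ᵥ (jacobiForm (coeffA a 0) *ᵥ e) := by
  have h := jacobiWronskian_eq_add_sum (coeffS_transpose hb_sym z)
    (solvesJacobi_fundSol_mulVec ha_inv z d) (solvesJacobi_fundSol_mulVec ha_inv z e) p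
  have hA : coeffA a p = coeffA a 0 := by simp [coeffA, hap]
  simpa only [jacobiWronskian, Pi.zero_apply, dotProduct_zero, Finset.sum_const_zero, add_zero,
    zero_add, fundSol_zero_mulVec, fundSol_one_mulVec, Sum.elim_comp_inl_inr, hA,
    ← monodromy_mulVec] using h

theorem monodromy_mulVec_dotProduct_jacobiForm_evalDeriv (ha_inv : ∀ n : ℤ, IsUnit (a n).det)
    (hb_sym : ∀ n : ℤ, (b n)ᵀ = b n) (hap : a p = a 0) (z : ℂ) (d e : Fin m ⊕ Fin m → ℂ) :
    (monodromy a b p z *ᵥ d) ⬝ᵥ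
        (jacobiForm (coeffA a 0) *ᵥ (evalDeriv z (monodromyPoly a b p) *ᵥ e)) =
      ∑ k ∈ Finset.range p, (fundSol a b z (k + 1) *ᵥ d) ⬝ᵥ (fundSol a b z (k + 1) *ᵥ e) := by
  have h := jacobiWronskian_eq_add_sum (coeffS_transpose hb_sym z)
    (solvesJacobi_fundSol_mulVec ha_inv z d) (solvesJacobi_evalDeriv_fundPoly_mulVec ha_inv z e) p
  have hA : coeffA a p = coeffA a 0 := by simp [coeffA, hap]
  simpa only [jacobiWronskian, zero_add, evalDeriv_fundPoly_zero, evalDeriv_fundPoly_one,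
    zero_mulVec, Sum.elim_zero_zero, mulVec_zero, dotProduct_zero, hA, ← monodromy_mulVec,
    ← evalDeriv_monodromyPoly_mulVec] using h

end Monodromy

section Unimodular

variable {m : ℕ} {a b : ℤ → Matrix (Fin m) (Fin m) ℝ} {p : ℕ} {τ : ℂ} {ψ : Fin m ⊕ Fin m → ℂ}

lemma monodromy_mulVec_star_of_mulVec_eq_smul (x : ℝ) (hψ : monodromy a b p x *ᵥ ψ = τ • ψ) :
    monodromy a b p x *ᵥ star ψ = star τ • star ψ := by
  rw [monodromy_mulVec_star, hψ, star_smul]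

lemma vecMul_jacobiForm_ne_zero (ha_inv : ∀ n : ℤ, IsUnit (a n).det) (hψ0 : ψ ≠ 0) :
    star ψ ᵥ* jacobiForm (coeffA a 0) ≠ 0 := fun h =>
  star_ne_zero.mpr hψ0 <| vecMul_injective_of_isUnit
    (isUnit_jacobiForm (isUnit_det_coeffA ha_inv 0)) (h.trans (zero_vecMul _).symm)

lemma vecMul_jacobiForm_vecMul_monodromy_sub_eq_zero (ha_inv : ∀ n : ℤ, IsUnit (a n).det)
    (hb_sym : ∀ n : ℤ, (b n)ᵀ = b n) (hap : a p = a 0) (x : ℝ) (hτ : τ * star τ = 1)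
    (hψ : monodromy a b p x *ᵥ ψ = τ • ψ) :
    (star ψ ᵥ* jacobiForm (coeffA a 0)) ᵥ* (monodromy a b p x - τ • 1) = 0 := by
  ext j
  have h := monodromy_mulVec_dotProduct_jacobiForm ha_inv hb_sym hap x (star ψ) (Pi.single j 1)
  rw [monodromy_mulVec_star_of_mulVec_eq_smul x hψ, smul_dotProduct, smul_eq_mul] at h
  rw [Pi.zero_apply, ← dotProduct_single_one (_ ᵥ* _) j, ← dotProduct_mulVec,
    ← dotProduct_mulVec, sub_mulVec, smul_mulVec, one_mulVec, mulVec_sub, dotProduct_sub,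
    mulVec_smul, dotProduct_smul, smul_eq_mul, ← h]
  linear_combination
    (-(star ψ ⬝ᵥ (jacobiForm (coeffA a 0) *ᵥ (monodromy a b p x *ᵥ Pi.single j 1)))) * hτ

lemma vecMul_jacobiForm_dotProduct_evalDeriv_monodromyPoly (ha_inv : ∀ n : ℤ, IsUnit (a n).det)
    (hb_sym : ∀ n : ℤ, (b n)ᵀ = b n) (hap : a p = a 0) (x : ℝ) (hτ : τ * star τ = 1)
    (hψ : monodromy a b p x *ᵥ ψ = τ • ψ) :
    (star ψ ᵥ* jacobiForm (coeffA a 0)) ⬝ᵥ (evalDeriv (x : ℂ) (monodromyPoly a b p) *ᵥ ψ) =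
      τ * ∑ k ∈ Finset.range p,
        star (fundSol a b x (k + 1) *ᵥ ψ) ⬝ᵥ (fundSol a b x (k + 1) *ᵥ ψ) := by
  have h := monodromy_mulVec_dotProduct_jacobiForm_evalDeriv ha_inv hb_sym hap x (star ψ) ψ
  rw [monodromy_mulVec_star_of_mulVec_eq_smul x hψ, smul_dotProduct, smul_eq_mul] at h
  simp only [star_fundSol_mulVec]
  rw [← h, ← dotProduct_mulVec, ← mul_assoc, hτ, one_mul]

open scoped ComplexOrder in
lemma sum_star_fundSol_mulVec_ne_zero (z : ℂ) (hp : 1 ≤ p) (hτ : τ ≠ 0) (hψ0 : ψ ≠ 0)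
    (hψ : monodromy a b p z *ᵥ ψ = τ • ψ) :
    ∑ k ∈ Finset.range p,
      star (fundSol a b z (k + 1) *ᵥ ψ) ⬝ᵥ (fundSol a b z (k + 1) *ᵥ ψ) ≠ 0 := by
  refine (Finset.sum_pos' (fun k _ => dotProduct_star_self_nonneg _) ?_).ne'
  by_cases hinr : ψ ∘ Sum.inr = 0
  · have hinl : ψ ∘ Sum.inl ≠ 0 := fun hinl =>
      hψ0 (by rw [← Sum.elim_comp_inl_inr ψ, hinl, hinr, Sum.elim_zero_zero])
    have hψp : fundSol a b z p *ᵥ ψ = τ • (ψ ∘ Sum.inl) := by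
      have h := congrArg (· ∘ Sum.inl) hψ
      simp only [monodromy_mulVec, Sum.elim_comp_inl] at h
      exact h
    refine ⟨p - 1, Finset.mem_range.mpr (by omega), ?_⟩
    rw [Nat.sub_add_cancel hp, hψp, dotProduct_star_self_pos_iff]
    exact smul_ne_zero hτ hinl
  · refine ⟨0, Finset.mem_range.mpr (by omega), ?_⟩
    rw [fundSol_one_mulVec, dotProduct_star_self_pos_iff]
    exact hinr

end Unimodular

lemma Polynomial.isRoot_and_not_isRoot_derivative_of_rootMultiplicity_eq_one {R : Type*}
    [CommRing R] {q : R[X]} {t : R} (h : q.rootMultiplicity t = 1) :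
    q.IsRoot t ∧ ¬(derivative q).IsRoot t := by
  have hq : q ≠ 0 := by rintro rfl; simp at h
  have hroot : q.IsRoot t := (rootMultiplicity_pos hq).mp (by omega)
  refine ⟨hroot, fun hd => ?_⟩
  have := (one_lt_rootMultiplicity_iff_isRoot hq).mpr ⟨hroot, hd⟩
  omega

theorem simple_unimodular_multiplier_z_derivative_ne_zero_general (m p : ℕ) (hp : 1 ≤ p)
    (a b : ℤ → Matrix (Fin m) (Fin m) ℝ)
    (ha_per : ∀ n : ℤ, a (n + p) = a n)
    (hb_sym : ∀ n : ℤ, (b n)ᵀ = b n) (ha_inv : ∀ n : ℤ, IsUnit (a n).det)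
    (z₀ : ℝ) (τ₀ : ℂ) (hτ₀ : ‖τ₀‖ = 1)
    (hsimple : (DpolyTau a b p (z₀ : ℂ)).rootMultiplicity τ₀ = 1) :
    deriv (fun z : ℂ => Dfun a b p z τ₀) (z₀ : ℂ) ≠ 0 := by
  have hap : a p = a 0 := by simpa using ha_per 0
  have hτ : τ₀ * star τ₀ = 1 := by rw [Complex.star_def, Complex.mul_conj', hτ₀]; norm_num
  have hτ0 : τ₀ ≠ 0 := left_ne_zero_of_mul_eq_one hτ
  obtain ⟨hroot, hsimple'⟩ :=
    isRoot_and_not_isRoot_derivative_of_rootMultiplicity_eq_one hsimple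
  obtain ⟨ψ, hψ0, hψ⟩ : ∃ ψ ≠ 0, (monodromy a b p z₀ - τ₀ • 1) *ᵥ ψ = 0 :=
    exists_mulVec_eq_zero_iff.mpr (by rwa [IsRoot.def, eval_DpolyTau, Dfun] at hroot)
  have hMψ : monodromy a b p z₀ *ᵥ ψ = τ₀ • ψ := by
    rwa [sub_mulVec, smul_mulVec, one_mulVec, sub_eq_zero] at hψ
  obtain ⟨κ, hκ⟩ := exists_eval_derivative_det_eq_mul_dotProduct _
    (vecMul_jacobiForm_vecMul_monodromy_sub_eq_zero ha_inv hb_sym hap z₀ hτ hMψ) hψ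
    (vecMul_jacobiForm_ne_zero ha_inv hψ0) hψ0
  have hκ0 : κ ≠ 0 := by
    rintro rfl
    refine hsimple' ?_
    rw [IsRoot.def, DpolyTau, hκ τ₀ _ (by rw [map_eval_sub, map_eval_map_C, map_eval_X_smul_one]),
      zero_mul]
  simp_rw [Dfun_eq_eval]
  rw [Polynomial.deriv, hκ z₀ _ (by rw [map_eval_sub, map_eval_monodromyPoly, map_eval_map_C]),
    evalDeriv_sub, evalDeriv_map_C, sub_zero,
    vecMul_jacobiForm_dotProduct_evalDeriv_monodromyPoly ha_inv hb_sym hap z₀ hτ hMψ]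
  exact mul_ne_zero hκ0 (mul_ne_zero hτ0 (sum_star_fundSol_mulVec_ne_zero _ hp hτ0 hψ0 hMψ))

/-- If `z₀` is real and `τ₀` with `|τ₀| = 1` is a simple root of `τ ↦ D(z₀,τ)`,
then `∂D/∂z (z₀,τ₀) ≠ 0`. -/
theorem simple_unimodular_multiplier_z_derivative_ne_zero (m p : ℕ) (hm : 1 ≤ m) (hp : 1 ≤ p)
    (a b : ℤ → Matrix (Fin m) (Fin m) ℝ)
    (ha_per : ∀ n : ℤ, a (n + p) = a n) (hb_per : ∀ n : ℤ, b (n + p) = b n)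
    (hb_sym : ∀ n : ℤ, (b n)ᵀ = b n) (ha_inv : ∀ n : ℤ, IsUnit (a n).det)
    (z₀ : ℝ) (τ₀ : ℂ) (hτ₀ : ‖τ₀‖ = 1)
    (hsimple : (DpolyTau a b p (z₀ : ℂ)).rootMultiplicity τ₀ = 1) :
    deriv (fun z : ℂ => Dfun a b p z τ₀) (z₀ : ℂ) ≠ 0 :=
  simple_unimodular_multiplier_z_derivative_ne_zero_general m p hp a b ha_per hb_sym ha_inv z₀ τ₀
    hτ₀ hsimple
end
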